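/- Let P⃗=(p_1,…,p_m) with 1<p_1,…,p_m<∞ and 1/p = 1/p_1+⋯+1/p_m, and let 0<ε<1. Define the weights w_i(x) = |x|^{(n−ε)(p_i−1)} on ℝ^n for i=1,…,m, and set σ_i = w_i^{1-p_i'}. Then v_{w⃗}(x) = |x|^{(n−ε)(mp−1)}, [w⃗]_{A_{P⃗}} = [v_{w⃗}]_{A_{mp}} ≍ (1/ε)^{mp−1}, and [σ_i]_{A_∞} ≲ 1/ε for each i, with implicit constants depending only on m, n and P⃗. -/

import Mathlib

open MeasureTheory ENNReal Set Function

noncomputable section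

namespace Paper

/-- `ℝⁿ` with the Euclidean norm. -/
abbrev Rn (n : ℕ) : Type := EuclideanSpace ℝ (Fin n)

/-- An axis-parallel half-open cube in `ℝⁿ`. -/
structure Cube (n : ℕ) where
  corner : Rn n
  side : ℝ
  side_pos : 0 < side

/-- The underlying set of a cube. -/
def Cube.set {n : ℕ} (Q : Cube n) : Set (Rn n) :=
  {x | ∀ i, Q.corner i ≤ x i ∧ x i < Q.corner i + Q.side}

/-- The `w`-measure `∫_E w` of a set, for a (real, nonnegative) weight `w`. -/
def wvol {n : ℕ} (w : Rn n → ℝ) (E : Set (Rn n)) : ℝ≥0∞ :=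
  ∫⁻ x in E, ENNReal.ofReal (w x)

/-- The average `(1/|Q|) ∫_Q w` of a weight over a cube. -/
def avg {n : ℕ} (w : Rn n → ℝ) (Q : Cube n) : ℝ≥0∞ :=
  wvol w Q.set / volume Q.set

/-- The Hardy–Littlewood maximal function of a weight. -/
def maximal {n : ℕ} (w : Rn n → ℝ) (x : Rn n) : ℝ≥0∞ :=
  ⨆ (Q : Cube n) (_ : x ∈ Q.set), avg w Q

/-- The Fujii–Wilson `A_∞` constant of a weight. -/
def AinfConst {n : ℕ} (w : Rn n → ℝ) : ℝ≥0∞ :=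
  ⨆ Q : Cube n, (∫⁻ x in Q.set, maximal (Q.set.indicator w) x) / wvol w Q.set

/-- Conjugate exponent `q' = q/(q-1)`. -/
def conj (q : ℝ) : ℝ := q / (q - 1)

/-- The dual weights `σ_i = w_i^{1-p_i'}`. -/
def sigmaW {n m : ℕ} (P : Fin m → ℝ) (w : Fin m → Rn n → ℝ) (i : Fin m) : Rn n → ℝ :=
  fun x => w i x ^ (1 - conj (P i))

/-- The weight `v_{w⃗} = ∏ w_i^{p/p_i}`. -/
def vweight {n m : ℕ} (p : ℝ) (P : Fin m → ℝ) (w : Fin m → Rn n → ℝ) : Rn n → ℝ :=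
  fun x => ∏ i, w i x ^ (p / P i)

/-- The multilinear `A_{P⃗}` constant. -/
def APConst {n m : ℕ} (p : ℝ) (P : Fin m → ℝ) (w : Fin m → Rn n → ℝ) : ℝ≥0∞ :=
  ⨆ Q : Cube n, avg (vweight p P w) Q * ∏ i, avg (sigmaW P w i) Q ^ (p / conj (P i))

/-- The measure `w(x) dx`. -/
def wMeasure {n : ℕ} (w : Rn n → ℝ) : Measure (Rn n) :=
  volume.withDensity fun x => ENNReal.ofReal (w x)

/-- The weighted Lebesgue norm `‖f‖_{L^p(w)}`. -/
def wLpNorm {n : ℕ} (p : ℝ) (w : Rn n → ℝ) (f : Rn n → ℝ) : ℝ≥0∞ :=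
  eLpNorm f (ENNReal.ofReal p) (wMeasure w)

/-- The weighted Lebesgue norm of an `ℝ≥0∞`-valued function. -/
def wLpNormE {n : ℕ} (p : ℝ) (w : Rn n → ℝ) (g : Rn n → ℝ≥0∞) : ℝ≥0∞ :=
  (∫⁻ x, g x ^ p ∂(wMeasure w)) ^ (1 / p)

/-- The weak norm `‖f‖_{L^{p,∞}(w)}`. -/
def wWeakNorm {n : ℕ} (p : ℝ) (w : Rn n → ℝ) (f : Rn n → ℝ) : ℝ≥0∞ :=
  ⨆ (t : ℝ) (_ : 0 < t), ENNReal.ofReal t * wMeasure w {x | t < |f x|} ^ (1 / p)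

/-- The weak norm of an `ℝ≥0∞`-valued function. -/
def wWeakNormE {n : ℕ} (p : ℝ) (w : Rn n → ℝ) (g : Rn n → ℝ≥0∞) : ℝ≥0∞ :=
  ⨆ (t : ℝ) (_ : 0 < t), ENNReal.ofReal t * wMeasure w {x | ENNReal.ofReal t < g x} ^ (1 / p)

/-- A general dyadic grid. -/
def IsDyadicGrid {n : ℕ} (D : Set (Cube n)) : Prop :=
  (∀ Q ∈ D, ∃ k : ℤ, Q.side = 2 ^ k) ∧
  (∀ Q ∈ D, ∀ R ∈ D, Q.set ⊆ R.set ∨ R.set ⊆ Q.set ∨ Q.set ∩ R.set = ∅) ∧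
  (∀ (k : ℤ) (x : Rn n), ∃! Q : Cube n, Q ∈ D ∧ Q.side = 2 ^ k ∧ x ∈ Q.set)

/-- The union `Γ_k` of the cubes of generation `k` of a family. -/
def levelSet {n : ℕ} (S : Set (Cube n)) (lvl : Cube n → ℤ) (k : ℤ) : Set (Rn n) :=
  ⋃ Q ∈ {Q ∈ S | lvl Q = k}, Cube.set Q

/-- A sparse family inside a dyadic grid: the cubes carry generations `lvl` such that cubes of
a fixed generation are pairwise disjoint, `Γ_{k+1} ⊆ Γ_k`, and `|Γ_{k+1} ∩ Q| ≤ |Q|/2`. -/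
def IsSparse {n : ℕ} (D S : Set (Cube n)) : Prop :=
  S ⊆ D ∧ ∃ lvl : Cube n → ℤ,
    (∀ Q ∈ S, ∀ R ∈ S, lvl Q = lvl R → Q ≠ R → Q.set ∩ R.set = ∅) ∧
    (∀ k : ℤ, levelSet S lvl (k + 1) ⊆ levelSet S lvl k) ∧
    (∀ Q ∈ S, volume (levelSet S lvl (lvl Q + 1) ∩ Q.set) ≤ volume Q.set / 2)

/-- The bilinear sparse operator `A_{𝒟,𝒮}`. -/
def sparseOp {n : ℕ} (S : Set (Cube n)) (g₁ g₂ : Rn n → ℝ) (x : Rn n) : ℝ≥0∞ :=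
  ∑' Q : S,
    Set.indicator (Q : Cube n).set
      (fun _ =>
        ((∫⁻ y in (Q : Cube n).set, ENNReal.ofReal (g₁ y)) / volume (Q : Cube n).set) *
        ((∫⁻ y in (Q : Cube n).set, ENNReal.ofReal (g₂ y)) / volume (Q : Cube n).set)) x

/-- The multilinear Hardy–Littlewood maximal function. -/
def multiMaximal {n m : ℕ} (f : Fin m → Rn n → ℝ) (x : Rn n) : ℝ≥0∞ :=
  ⨆ (Q : Cube n) (_ : x ∈ Q.set), ∏ i, (∫⁻ y in Q.set, ENNReal.ofReal |f i y|) / volume Q.set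

/-- The dyadic multilinear maximal function. -/
def multiMaximalD {n m : ℕ} (D : Set (Cube n)) (f : Fin m → Rn n → ℝ) (x : Rn n) : ℝ≥0∞ :=
  ⨆ (Q : Cube n) (_ : Q ∈ D) (_ : x ∈ Q.set),
    ∏ i, (∫⁻ y in Q.set, ENNReal.ofReal |f i y|) / volume Q.set

/-- Bilinear: the dual weight `σ = w^{1-q'}`. -/
def sig {n : ℕ} (q : ℝ) (w : Rn n → ℝ) : Rn n → ℝ := fun x => w x ^ (1 - conj q)

/-- Bilinear: the weight `v = w₁^{p/p₁} w₂^{p/p₂}`. -/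
def vw2 {n : ℕ} (p p₁ p₂ : ℝ) (w₁ w₂ : Rn n → ℝ) : Rn n → ℝ :=
  fun x => w₁ x ^ (p / p₁) * w₂ x ^ (p / p₂)

/-- Bilinear `A_{(p₁,p₂)}` constant. -/
def AP2 {n : ℕ} (p p₁ p₂ : ℝ) (w₁ w₂ : Rn n → ℝ) : ℝ≥0∞ :=
  ⨆ Q : Cube n, avg (vw2 p p₁ p₂ w₁ w₂) Q *
    avg (sig p₁ w₁) Q ^ (p / conj p₁) * avg (sig p₂ w₂) Q ^ (p / conj p₂)

/-- The quantity `σ₁(Q)σ₂(Q)/|Q|²`. -/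
def cubeRatio {n : ℕ} (σ₁ σ₂ : Rn n → ℝ) (Q : Cube n) : ℝ≥0∞ :=
  wvol σ₁ Q.set * wvol σ₂ Q.set / volume Q.set ^ 2

/-- The auxiliary operator `𝒜 = Σ_{Q∈𝒬} (σ₁(Q)σ₂(Q)/|Q|²) χ_Q`. -/
def sparseA {n : ℕ} (𝒬 : Set (Cube n)) (σ₁ σ₂ : Rn n → ℝ) (x : Rn n) : ℝ≥0∞ :=
  ∑' Q : 𝒬, Set.indicator (Q : Cube n).set (fun _ => cubeRatio σ₁ σ₂ Q) x

/-- The linear `A_r` constant (for a real exponent `1 < r < ∞`). -/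
def ArConst {n : ℕ} (r : ℝ) (w : Rn n → ℝ) : ℝ≥0∞ :=
  ⨆ Q : Cube n, avg w Q * avg (fun x => w x ^ (1 - conj r)) Q ^ (r - 1)

/-- An `m`-linear Calderón–Zygmund kernel with constants `A`, `ε`. -/
structure IsCZKernel (n m : ℕ) (A ε : ℝ) (K : (Fin (m + 1) → Rn n) → ℝ) : Prop where
  size : ∀ y : Fin (m + 1) → Rn n, (∃ k l, y k ≠ y l) →
    |K y| ≤ A / (∑ k, ∑ l, dist (y k) (y l)) ^ ((m * n : ℕ) : ℝ)
  smooth : ∀ (y : Fin (m + 1) → Rn n) (i : Fin (m + 1)) (y' : Rn n),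
    (∃ k l, y k ≠ y l) →
    dist (y i) y' ≤ (1 / 2) * ⨆ k, dist (y i) (y k) →
    |K y - K (Function.update y i y')| ≤
      A * dist (y i) y' ^ ε / (∑ k, ∑ l, dist (y k) (y l)) ^ (((m * n : ℕ) : ℝ) + ε)

/-- An `m`-linear Calderón–Zygmund operator with kernel constants `A`, `ε`: it is multilinear,
bounded on some product of Lebesgue spaces, and is represented off the support by integration
against a Calderón–Zygmund kernel. -/
structure IsCZO (n m : ℕ) (A ε : ℝ) (T : (Fin m → Rn n → ℝ) → Rn n → ℝ) : Prop where
  map_add : ∀ (f : Fin m → Rn n → ℝ) (i : Fin m) (g h : Rn n → ℝ),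
    T (Function.update f i (g + h)) = T (Function.update f i g) + T (Function.update f i h)
  map_smul : ∀ (f : Fin m → Rn n → ℝ) (i : Fin m) (c : ℝ) (g : Rn n → ℝ),
    T (Function.update f i (c • g)) = c • T (Function.update f i g)
  bounded : ∃ (q : Fin m → ℝ) (C : ℝ), (∀ i, 1 ≤ q i) ∧
    ∀ f : Fin m → Rn n → ℝ,
      eLpNorm (T f) (ENNReal.ofReal (1 / ∑ i, 1 / q i)) volume ≤
        ENNReal.ofReal C * ∏ i, eLpNorm (f i) (ENNReal.ofReal (q i)) volume
  kernel : ∃ K : (Fin (m + 1) → Rn n) → ℝ, IsCZKernel n m A ε K ∧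
    ∀ f : Fin m → Rn n → ℝ, (∀ i, Measurable (f i)) → (∀ i, HasCompactSupport (f i)) →
      (∀ i, ∃ M : ℝ, ∀ x, |f i x| ≤ M) →
      ∀ x, x ∉ ⋂ i, tsupport (f i) →
        T f x = ∫ y : Fin m → Rn n, K (Fin.cons x y) * ∏ i, f i (y i)

/-!
Every dual weight `σᵢ = wᵢ^{1-pᵢ'}` equals `σ = ‖x‖^{-(n-ε)}`, and `v_{w⃗}^{1-(mp)'} = σ` as well,
so the `A_{P⃗}` supremum is literally the `A_{mp}` supremum of `v_{w⃗}`. In polar coordinates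
`∫_{B(0,r)} σ = c_n r^ε / ε`. For a cube `Q` let `R_Q = ‖corner‖ + √n · side`, so that
`Q ⊆ B(0, R_Q)`: if `Q` is near the origin then `|Q| ≳ R_Q^n` and the ball integral gives
`⨍_Q σ ≲ ε⁻¹ R_Q^{-(n-ε)}`; if it is far then `σ ≈ R_Q^{-(n-ε)}` on `Q`. Together with
`⨍_Q v_{w⃗} ≤ R_Q^{(n-ε)(mp-1)}` this bounds the `A_{mp}` product by `ε^{-(mp-1)}`, and since
`R_Q > ‖x‖` for `x ∈ Q` it also gives `Mσ ≲ σ / ε`, whence the `A_∞` bound. The lower bound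
comes from the cube `[-1/2, 1/2)ⁿ ⊇ B(0, 1/2)`.
-/

open Metric

section Cubes

variable {n : ℕ}

lemma Cube.set_eq (Q : Cube n) :
    Q.set = (MeasurableEquiv.toLp 2 (Fin n → ℝ)).symm ⁻¹'
      (univ.pi fun i => Ico (Q.corner i) (Q.corner i + Q.side)) := by
  ext x
  simp [Cube.set, Set.mem_pi, MeasurableEquiv.toLp_symm_apply]

lemma Cube.volume_set (Q : Cube n) : volume Q.set = ENNReal.ofReal (Q.side ^ n) := by
  rw [Cube.set_eq,
    (EuclideanSpace.volume_preserving_symm_measurableEquiv_toLp (Fin n)).measure_preimage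
      (MeasurableSet.univ_pi fun _ => measurableSet_Ico).nullMeasurableSet, volume_pi_pi]
  simp [Real.volume_Ico, ENNReal.ofReal_pow Q.side_pos.le]

lemma Cube.norm_sub_corner_lt (hn : 0 < n) (Q : Cube n) {x : Rn n} (hx : x ∈ Q.set) :
    ‖x - Q.corner‖ < √n * Q.side := by
  have hcoord : ∀ i, ‖(x - Q.corner) i‖ ^ 2 < Q.side ^ 2 := fun i => by
    obtain ⟨h₁, h₂⟩ := hx i
    rw [PiLp.sub_apply, Real.norm_eq_abs, sq_abs]
    nlinarith
  have : Nonempty (Fin n) := ⟨⟨0, hn⟩⟩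
  have hsq : ‖x - Q.corner‖ ^ 2 < (√n * Q.side) ^ 2 := by
    rw [EuclideanSpace.norm_sq_eq, mul_pow, Real.sq_sqrt n.cast_nonneg]
    calc ∑ i, ‖(x - Q.corner) i‖ ^ 2 < ∑ _i : Fin n, Q.side ^ 2 :=
          Finset.sum_lt_sum_of_nonempty Finset.univ_nonempty fun i _ => hcoord i
      _ = n * Q.side ^ 2 := by simp
  exact lt_of_pow_lt_pow_left₀ 2 (by have := Q.side_pos; positivity) hsq

def Cube.radius (Q : Cube n) : ℝ := ‖Q.corner‖ + √n * Q.side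

lemma Cube.radius_pos (hn : 0 < n) (Q : Cube n) : 0 < Q.radius := by
  have : 0 < √(n : ℝ) := Real.sqrt_pos.mpr (by exact_mod_cast hn)
  have := Q.side_pos
  unfold Cube.radius
  positivity

lemma Cube.subset_ball_radius (hn : 0 < n) (Q : Cube n) : Q.set ⊆ ball 0 Q.radius := by
  intro x hx
  rw [mem_ball_zero_iff]
  calc ‖x‖ = ‖Q.corner + (x - Q.corner)‖ := by rw [add_sub_cancel]
    _ ≤ ‖Q.corner‖ + ‖x - Q.corner‖ := norm_add_le _ _
    _ < Q.radius := by have := Q.norm_sub_corner_lt hn hx; unfold Cube.radius; linarith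

lemma Cube.radius_le_three_mul_norm (hn : 0 < n) (Q : Cube n)
    (hfar : 2 * (√n * Q.side) ≤ ‖Q.corner‖) {x : Rn n} (hx : x ∈ Q.set) :
    Q.radius ≤ 3 * ‖x‖ := by
  have h₁ := Q.norm_sub_corner_lt hn hx
  have h₂ := norm_sub_norm_le Q.corner x
  rw [norm_sub_rev] at h₂
  unfold Cube.radius
  linarith

lemma Cube.radius_lt_three_mul (Q : Cube n) (hnear : ‖Q.corner‖ < 2 * (√n * Q.side)) :
    Q.radius < 3 * √n * Q.side := by
  unfold Cube.radius
  linarith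

def centeredUnitCube (n : ℕ) : Cube n := ⟨WithLp.toLp 2 fun _ => -1 / 2, 1, one_pos⟩

lemma ball_subset_centeredUnitCube : ball (0 : Rn n) (1 / 2) ⊆ (centeredUnitCube n).set := by
  intro x hx i
  have hi : |x i| < 1 / 2 := (PiLp.norm_apply_le x i).trans_lt (mem_ball_zero_iff.mp hx)
  rw [abs_lt] at hi
  change -1 / 2 ≤ x i ∧ x i < -1 / 2 + 1
  constructor <;> linarith

lemma avg_centeredUnitCube (w : Rn n → ℝ) :
    avg w (centeredUnitCube n) = wvol w (centeredUnitCube n).set := by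
  rw [avg, Cube.volume_set]
  simp [centeredUnitCube]

end Cubes

theorem lintegral_ball_norm_rpow {E : Type*} [NormedAddCommGroup E] [NormedSpace ℝ E]
    [FiniteDimensional ℝ E] [MeasurableSpace E] [BorelSpace E] [Nontrivial E]
    (μ : Measure E) [μ.IsAddHaarMeasure] {s r : ℝ}
    (hs : -(Module.finrank ℝ E : ℝ) < s) (hr : 0 ≤ r) :
    ∫⁻ x in ball (0 : E) r, ENNReal.ofReal (‖x‖ ^ s) ∂μ =
      ENNReal.ofReal (Module.finrank ℝ E * μ.real (ball 0 1) *
        (r ^ (Module.finrank ℝ E + s) / (Module.finrank ℝ E + s))) := by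
  set d := Module.finrank ℝ E
  have hd : 1 ≤ d := Module.finrank_pos
  have hint : IntegrableOn (fun x : E => ‖x‖ ^ s) (ball 0 r) μ :=
    integrableOn_ball_of_norm_le_rpow hd (α := -s) (C := 1) (by linarith)
      (Filter.Eventually.of_forall fun x => by
        simp [abs_of_nonneg (Real.rpow_nonneg (norm_nonneg x) s)])
      (measurable_norm.pow_const s).aestronglyMeasurable
  rw [← ofReal_integral_eq_lintegral_ofReal hint
    (Filter.Eventually.of_forall fun x => Real.rpow_nonneg (norm_nonneg x) s)]
  congr 1
  have h_ind : ∫ x in ball (0 : E) r, ‖x‖ ^ s ∂μ = ∫ x, (Iio r).indicator (· ^ s) ‖x‖ ∂μ := by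
    rw [← integral_indicator measurableSet_ball]
    congr 1
    ext x
    by_cases h : ‖x‖ < r <;> simp [h]
  have h_radial : ∫ y in Ioi (0 : ℝ), y ^ (d - 1) • (Iio r).indicator (· ^ s) y =
      r ^ (d + s) / (d + s) := by
    have h_pow : ∀ y ∈ Ioo (0 : ℝ) r, y ^ (d - 1) * y ^ s = y ^ ((d - 1 : ℝ) + s) := by
      intro y hy
      rw [Real.rpow_add hy.1, ← Real.rpow_natCast, Nat.cast_sub hd, Nat.cast_one]
    simp_rw [smul_eq_mul, ← indicator_mul_right _ (fun y : ℝ => y ^ (d - 1))]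
    rw [setIntegral_indicator measurableSet_Iio, Ioi_inter_Iio,
      setIntegral_congr_fun measurableSet_Ioo h_pow, ← integral_Ioc_eq_integral_Ioo,
      ← intervalIntegral.integral_of_le hr, integral_rpow (Or.inl (by linarith)),
      show (d - 1 : ℝ) + s + 1 = d + s by ring, Real.zero_rpow (by linarith), sub_zero]
  rw [h_ind, integral_fun_norm_addHaar, h_radial, nsmul_eq_mul, smul_eq_mul, mul_assoc]

section PowerWeights

variable {n : ℕ}

lemma wvol_ball_norm_rpow (hn : 0 < n) {s r : ℝ} (hs : -(n : ℝ) < s) (hr : 0 ≤ r) :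
    wvol (fun x : Rn n => ‖x‖ ^ s) (ball 0 r) =
      ENNReal.ofReal (n * volume.real (ball (0 : Rn n) 1) * (r ^ (n + s) / (n + s))) := by
  have : Nontrivial (Rn n) := Module.nontrivial_of_finrank_pos (R := ℝ) (by simpa using hn)
  have h := lintegral_ball_norm_rpow (volume : Measure (Rn n)) (s := s) (r := r)
  simp only [finrank_euclideanSpace_fin] at h
  exact h hs hr

-- `3 ^ n` serves the cubes far from the origin, the other term those near it.
def powerConst (n : ℕ) : ℝ := 3 ^ n + n * volume.real (ball (0 : Rn n) 1) * (3 * √n) ^ n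

lemma powerConst_pos (hn : 0 < n) : 0 < powerConst n := by
  unfold powerConst
  positivity

lemma wvol_norm_rpow_neg_le_of_far (hn : 0 < n) {ε : ℝ} (hε : 0 < ε) (hε1 : ε ≤ 1) (Q : Cube n)
    (hfar : 2 * (√n * Q.side) ≤ ‖Q.corner‖) :
    wvol (fun x : Rn n => ‖x‖ ^ (-(n - ε))) Q.set ≤
      ENNReal.ofReal (powerConst n / ε * Q.radius ^ (-(n - ε))) * volume Q.set := by
  have hR := Q.radius_pos hn
  have hn1 : (1 : ℝ) ≤ n := by exact_mod_cast hn
  have hpt : ∀ x ∈ Q.set, ENNReal.ofReal (‖x‖ ^ (-(n - ε))) ≤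
      ENNReal.ofReal ((Q.radius / 3) ^ (-(n - ε))) := fun x hx =>
    ENNReal.ofReal_le_ofReal <| Real.rpow_le_rpow_of_nonpos (div_pos hR three_pos)
      (by linarith [Q.radius_le_three_mul_norm hn hfar hx]) (by linarith)
  have h3 : (Q.radius / 3) ^ (-(n - ε)) ≤ powerConst n / ε * Q.radius ^ (-(n - ε)) := by
    rw [Real.div_rpow hR.le (by norm_num), Real.rpow_neg (by norm_num : (0 : ℝ) ≤ 3),
      div_inv_eq_mul, mul_comm]
    gcongr
    calc (3 : ℝ) ^ ((n : ℝ) - ε) ≤ 3 ^ (n : ℝ) :=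
          Real.rpow_le_rpow_of_exponent_le (by norm_num) (by linarith)
      _ = 3 ^ n := Real.rpow_natCast 3 n
      _ ≤ powerConst n := le_add_of_nonneg_right (by positivity)
      _ ≤ powerConst n / ε := le_div_self (powerConst_pos hn).le hε hε1
  calc wvol (fun x : Rn n => ‖x‖ ^ (-(n - ε))) Q.set
      ≤ ∫⁻ _ in Q.set, ENNReal.ofReal ((Q.radius / 3) ^ (-(n - ε))) :=
        setLIntegral_mono measurable_const hpt
    _ = ENNReal.ofReal ((Q.radius / 3) ^ (-(n - ε))) * volume Q.set := setLIntegral_const _ _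
    _ ≤ _ := by gcongr

lemma wvol_norm_rpow_neg_le_of_near (hn : 0 < n) {ε : ℝ} (hε : 0 < ε) (Q : Cube n)
    (hnear : ‖Q.corner‖ < 2 * (√n * Q.side)) :
    wvol (fun x : Rn n => ‖x‖ ^ (-(n - ε))) Q.set ≤
      ENNReal.ofReal (powerConst n / ε * Q.radius ^ (-(n - ε))) * volume Q.set := by
  have hR := Q.radius_pos hn
  have hRb := Real.rpow_nonneg hR.le (-(n - ε))
  have hRs := mul_nonneg hRb (pow_nonneg Q.side_pos.le n)
  have hpow : Q.radius ^ (n : ℝ) ≤ (3 * √n) ^ n * Q.side ^ n := by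
    rw [Real.rpow_natCast, ← mul_pow]
    exact pow_le_pow_left₀ hR.le (Q.radius_lt_three_mul hnear).le n
  have hK : n * volume.real (ball (0 : Rn n) 1) * (3 * √n) ^ n ≤ powerConst n :=
    le_add_of_nonneg_left (by positivity)
  rw [Q.volume_set, ← ENNReal.ofReal_mul (mul_nonneg (div_nonneg (powerConst_pos hn).le hε.le) hRb)]
  calc wvol (fun x : Rn n => ‖x‖ ^ (-(n - ε))) Q.set
      ≤ wvol (fun x : Rn n => ‖x‖ ^ (-(n - ε))) (ball 0 Q.radius) :=
        lintegral_mono_set (Q.subset_ball_radius hn)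
    _ = ENNReal.ofReal (n * volume.real (ball (0 : Rn n) 1) *
          (Q.radius ^ ((n : ℝ) + -(n - ε)) / ((n : ℝ) + -(n - ε)))) :=
        wvol_ball_norm_rpow hn (by linarith) hR.le
    _ ≤ _ := by
        apply ENNReal.ofReal_le_ofReal
        rw [add_comm, Real.rpow_add hR, show -((n : ℝ) - ε) + n = ε by ring]
        calc n * volume.real (ball (0 : Rn n) 1) *
              (Q.radius ^ (-(n - ε)) * Q.radius ^ (n : ℝ) / ε)
            ≤ n * volume.real (ball (0 : Rn n) 1) *
              (Q.radius ^ (-(n - ε)) * ((3 * √n) ^ n * Q.side ^ n) / ε) := by gcongr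
          _ = n * volume.real (ball (0 : Rn n) 1) * (3 * √n) ^ n / ε *
              (Q.radius ^ (-(n - ε)) * Q.side ^ n) := by ring
          _ ≤ powerConst n / ε * (Q.radius ^ (-(n - ε)) * Q.side ^ n) := by gcongr
          _ = _ := by ring

lemma avg_norm_rpow_neg_le (hn : 0 < n) {ε : ℝ} (hε : 0 < ε) (hε1 : ε ≤ 1) (Q : Cube n) :
    avg (fun x : Rn n => ‖x‖ ^ (-(n - ε))) Q ≤
      ENNReal.ofReal (powerConst n / ε * Q.radius ^ (-(n - ε))) := by
  refine ENNReal.div_le_of_le_mul ?_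
  rcases le_or_gt (2 * (√n * Q.side)) ‖Q.corner‖ with hfar | hnear
  · exact wvol_norm_rpow_neg_le_of_far hn hε hε1 Q hfar
  · exact wvol_norm_rpow_neg_le_of_near hn hε Q hnear

lemma avg_norm_rpow_le (hn : 0 < n) {a : ℝ} (ha : 0 ≤ a) (Q : Cube n) :
    avg (fun x : Rn n => ‖x‖ ^ a) Q ≤ ENNReal.ofReal (Q.radius ^ a) := by
  refine ENNReal.div_le_of_le_mul ?_
  calc wvol (fun x : Rn n => ‖x‖ ^ a) Q.set
      ≤ ∫⁻ _ in Q.set, ENNReal.ofReal (Q.radius ^ a) :=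
        setLIntegral_mono measurable_const fun x hx => ENNReal.ofReal_le_ofReal <|
          Real.rpow_le_rpow (norm_nonneg x)
            (mem_ball_zero_iff.mp (Q.subset_ball_radius hn hx)).le ha
    _ = ENNReal.ofReal (Q.radius ^ a) * volume Q.set := setLIntegral_const _ _

lemma avg_mul_avg_rpow_le (hn : 0 < n) {ε : ℝ} (hε : 0 < ε) (hε1 : ε ≤ 1) {r : ℝ} (hr : 1 ≤ r)
    (Q : Cube n) :
    avg (fun x : Rn n => ‖x‖ ^ ((n - ε) * (r - 1))) Q *
        avg (fun x : Rn n => ‖x‖ ^ (-(n - ε))) Q ^ (r - 1) ≤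
      ENNReal.ofReal (powerConst n / ε) ^ (r - 1) := by
  have hR := Q.radius_pos hn
  have hr1 : 0 ≤ r - 1 := by linarith
  have hn1 : (1 : ℝ) ≤ n := by exact_mod_cast hn
  have hcancel : Q.radius ^ ((n - ε) * (r - 1)) * (Q.radius ^ (-(n - ε))) ^ (r - 1) = 1 := by
    rw [← Real.rpow_mul hR.le, ← Real.rpow_add hR, neg_mul, add_neg_cancel, Real.rpow_zero]
  calc avg (fun x : Rn n => ‖x‖ ^ ((n - ε) * (r - 1))) Q *
        avg (fun x : Rn n => ‖x‖ ^ (-(n - ε))) Q ^ (r - 1)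
      ≤ ENNReal.ofReal (Q.radius ^ ((n - ε) * (r - 1))) *
          ENNReal.ofReal (powerConst n / ε * Q.radius ^ (-(n - ε))) ^ (r - 1) := by
        gcongr
        · exact avg_norm_rpow_le hn (mul_nonneg (by linarith) hr1) Q
        · exact avg_norm_rpow_neg_le hn hε hε1 Q
    _ = ENNReal.ofReal (powerConst n / ε) ^ (r - 1) := by
        rw [ENNReal.ofReal_mul (div_nonneg (powerConst_pos hn).le hε.le),
          ENNReal.mul_rpow_of_nonneg _ _ hr1, mul_left_comm,
          ENNReal.ofReal_rpow_of_nonneg (Real.rpow_nonneg hR.le _) hr1,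
          ← ENNReal.ofReal_mul (Real.rpow_nonneg hR.le _), hcancel, ENNReal.ofReal_one, mul_one]

lemma rpow_mul_sub_one_rpow_one_sub_conj {t : ℝ} (ht : 0 ≤ t) (b : ℝ) {q : ℝ} (hq : q ≠ 1) :
    (t ^ (b * (q - 1))) ^ (1 - conj q) = t ^ (-b) := by
  have : q - 1 ≠ 0 := sub_ne_zero.mpr hq
  rw [← Real.rpow_mul ht, conj]
  congr 1
  field_simp
  ring

lemma ArConst_norm_rpow_eq {b r : ℝ} (hr : r ≠ 1) :
    ArConst r (fun x : Rn n => ‖x‖ ^ (b * (r - 1))) =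
      ⨆ Q : Cube n, avg (fun x : Rn n => ‖x‖ ^ (b * (r - 1))) Q *
        avg (fun x : Rn n => ‖x‖ ^ (-b)) Q ^ (r - 1) := by
  simp only [ArConst, rpow_mul_sub_one_rpow_one_sub_conj (norm_nonneg _) b hr]

theorem ArConst_norm_rpow_le (hn : 0 < n) {ε : ℝ} (hε : 0 < ε) (hε1 : ε ≤ 1) {r : ℝ}
    (hr : 1 < r) :
    ArConst r (fun x : Rn n => ‖x‖ ^ ((n - ε) * (r - 1))) ≤
      ENNReal.ofReal (powerConst n / ε) ^ (r - 1) := by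
  rw [ArConst_norm_rpow_eq hr.ne']
  exact iSup_le fun Q => avg_mul_avg_rpow_le hn hε hε1 hr.le Q

lemma maximal_indicator_norm_rpow_neg_le (hn : 0 < n) {ε : ℝ} (hε : 0 < ε) (hε1 : ε ≤ 1)
    (s : Set (Rn n)) {x : Rn n} (hx : x ≠ 0) :
    maximal (s.indicator fun y : Rn n => ‖y‖ ^ (-(n - ε))) x ≤
      ENNReal.ofReal (powerConst n / ε) * ENNReal.ofReal (‖x‖ ^ (-(n - ε))) := by
  have hn1 : (1 : ℝ) ≤ n := by exact_mod_cast hn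
  rw [← ENNReal.ofReal_mul (div_nonneg (powerConst_pos hn).le hε.le)]
  refine iSup₂_le fun Q hxQ => ?_
  calc avg (s.indicator fun y : Rn n => ‖y‖ ^ (-(n - ε))) Q
      ≤ avg (fun y : Rn n => ‖y‖ ^ (-(n - ε))) Q :=
        ENNReal.div_le_div_right (lintegral_mono fun y => ENNReal.ofReal_le_ofReal <|
          indicator_le_self' (fun y _ => Real.rpow_nonneg (norm_nonneg y) _) y) _
    _ ≤ ENNReal.ofReal (powerConst n / ε * Q.radius ^ (-(n - ε))) :=
        avg_norm_rpow_neg_le hn hε hε1 Q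
    _ ≤ ENNReal.ofReal (powerConst n / ε * ‖x‖ ^ (-(n - ε))) :=
        ENNReal.ofReal_le_ofReal <| mul_le_mul_of_nonneg_left
          (Real.rpow_le_rpow_of_nonpos (norm_pos_iff.mpr hx)
            (mem_ball_zero_iff.mp (Q.subset_ball_radius hn hxQ)).le (by linarith))
          (div_nonneg (powerConst_pos hn).le hε.le)

theorem AinfConst_norm_rpow_neg_le (hn : 0 < n) {ε : ℝ} (hε : 0 < ε) (hε1 : ε ≤ 1) :
    AinfConst (fun x : Rn n => ‖x‖ ^ (-(n - ε))) ≤ ENNReal.ofReal (powerConst n / ε) := by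
  have : Nontrivial (Rn n) := Module.nontrivial_of_finrank_pos (R := ℝ) (by simpa using hn)
  have h_ne : ∀ᵐ x : Rn n, x ≠ 0 := compl_mem_ae_iff.mpr (measure_singleton 0)
  refine iSup_le fun Q => ENNReal.div_le_of_le_mul ?_
  calc ∫⁻ x in Q.set, maximal (Q.set.indicator fun y : Rn n => ‖y‖ ^ (-(n - ε))) x
      ≤ ∫⁻ x in Q.set, ENNReal.ofReal (powerConst n / ε) * ENNReal.ofReal (‖x‖ ^ (-(n - ε))) :=
        lintegral_mono_ae <| ae_restrict_of_ae <| h_ne.mono fun x hx =>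
          maximal_indicator_norm_rpow_neg_le hn hε hε1 Q.set hx
    _ = ENNReal.ofReal (powerConst n / ε) * wvol (fun x : Rn n => ‖x‖ ^ (-(n - ε))) Q.set :=
        lintegral_const_mul _ (measurable_norm.pow_const _).ennreal_ofReal

lemma ofReal_le_avg_centeredUnitCube_norm_rpow (hn : 0 < n) {s : ℝ} (hs : -(n : ℝ) < s) :
    ENNReal.ofReal (n * volume.real (ball (0 : Rn n) 1) * ((1 / 2) ^ (n + s) / (n + s))) ≤
      avg (fun x : Rn n => ‖x‖ ^ s) (centeredUnitCube n) := by
  rw [avg_centeredUnitCube, ← wvol_ball_norm_rpow hn hs (by norm_num)]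
  exact lintegral_mono_set ball_subset_centeredUnitCube

theorem exists_pos_mul_le_ArConst_norm_rpow (hn : 0 < n) {r : ℝ} (hr : 1 < r) :
    ∃ c : ℝ≥0∞, 0 < c ∧ ∀ ε : ℝ, 0 < ε → ε ≤ 1 →
      c * ENNReal.ofReal (1 / ε) ^ (r - 1) ≤
        ArConst r (fun x : Rn n => ‖x‖ ^ ((n - ε) * (r - 1))) := by
  set ω := n * volume.real (ball (0 : Rn n) 1)
  have hn1 : (1 : ℝ) ≤ n := by exact_mod_cast hn
  have hω : 0 < ω := mul_pos (by positivity) <|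
    ENNReal.toReal_pos (measure_ball_pos volume 0 one_pos).ne' measure_ball_lt_top.ne
  refine ⟨ENNReal.ofReal (ω * ((1 / 2) ^ (n * r) / (n * r))) * ENNReal.ofReal (ω / 2) ^ (r - 1),
    by positivity, fun ε hε hε1 => ?_⟩
  have hv : ENNReal.ofReal (ω * ((1 / 2) ^ (n * r) / (n * r))) ≤
      avg (fun x : Rn n => ‖x‖ ^ ((n - ε) * (r - 1))) (centeredUnitCube n) := by
    have ha : 0 ≤ ((n : ℝ) - ε) * (r - 1) := mul_nonneg (by linarith) (by linarith)
    have han : (n : ℝ) + (n - ε) * (r - 1) ≤ n * r := by nlinarith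
    refine le_trans (ENNReal.ofReal_le_ofReal ?_) (ofReal_le_avg_centeredUnitCube_norm_rpow hn
      (by linarith))
    gcongr ω * ?_
    exact div_le_div₀ (by positivity)
      (Real.rpow_le_rpow_of_exponent_ge (by norm_num) (by norm_num) han) (by positivity) han
  have hσ : ENNReal.ofReal (ω / 2) * ENNReal.ofReal (1 / ε) ≤
      avg (fun x : Rn n => ‖x‖ ^ (-(n - ε))) (centeredUnitCube n) := by
    refine le_trans ?_ (ofReal_le_avg_centeredUnitCube_norm_rpow hn (by linarith))
    rw [← ENNReal.ofReal_mul (by positivity), show (n : ℝ) + -(n - ε) = ε by ring]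
    apply ENNReal.ofReal_le_ofReal
    have : (1 / 2 : ℝ) ≤ (1 / 2) ^ ε := by
      simpa using Real.rpow_le_rpow_of_exponent_ge (by norm_num : (0 : ℝ) < 1 / 2) (by norm_num) hε1
    calc ω / 2 * (1 / ε) = ω * ((1 / 2) / ε) := by ring
      _ ≤ ω * ((1 / 2) ^ ε / ε) := by gcongr
  rw [ArConst_norm_rpow_eq hr.ne']
  refine le_trans ?_ (le_iSup _ (centeredUnitCube n))
  rw [mul_assoc, ← ENNReal.mul_rpow_of_nonneg _ _ (by linarith)]
  gcongr

end PowerWeights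

section Multilinear

variable {n m : ℕ} {p : ℝ} {P : Fin m → ℝ}

lemma conj_pos {q : ℝ} (hq : 1 < q) : 0 < conj q := div_pos (by linarith) (by linarith)

lemma sub_one_mul_div_eq_div_conj (p q : ℝ) : (q - 1) * (p / q) = p / conj q := by
  rw [conj, div_div_eq_mul_div]
  ring

lemma sum_div_conj (hP : ∀ i, P i ≠ 0) (hsum : 1 / p = ∑ i, 1 / P i) (hp : p ≠ 0) :
    ∑ i, p / conj (P i) = m * p - 1 := by
  have h : ∀ i, p / conj (P i) = p - p * (1 / P i) := fun i => by
    have := hP i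
    rw [← sub_one_mul_div_eq_div_conj]
    field_simp
  simp only [h, Finset.sum_sub_distrib, ← Finset.mul_sum, ← hsum, Finset.sum_const,
    Finset.card_univ, Fintype.card_fin, nsmul_eq_mul, mul_one_div_cancel hp]

lemma pos_and_one_lt_mul_of_sum_inv (hm : 0 < m) (hP : ∀ i, 1 < P i)
    (hsum : 1 / p = ∑ i, 1 / P i) : 0 < p ∧ 1 < m * p := by
  have hne : (Finset.univ : Finset (Fin m)).Nonempty := Finset.univ_nonempty_iff.mpr ⟨⟨0, hm⟩⟩
  have hp : 0 < p := one_div_pos.mp <|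
    hsum ▸ Finset.sum_pos (fun i _ => one_div_pos.mpr (by linarith [hP i])) hne
  have hP₀ : ∀ i, P i ≠ 0 := fun i => (zero_lt_one.trans (hP i)).ne'
  refine ⟨hp, sub_pos.mp ?_⟩
  rw [← sum_div_conj hP₀ hsum hp.ne']
  exact Finset.sum_pos (fun i _ => div_pos hp (conj_pos (hP i))) hne

lemma vweight_norm_rpow (hm : 0 < m) (hP : ∀ i, 1 < P i) (hsum : 1 / p = ∑ i, 1 / P i)
    {b : ℝ} (hb : 0 ≤ b) (x : Rn n) :
    vweight p P (fun i (x : Rn n) => ‖x‖ ^ (b * (P i - 1))) x = ‖x‖ ^ (b * (m * p - 1)) := by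
  have hp := (pos_and_one_lt_mul_of_sum_inv hm hP hsum).1
  have hP₀ : ∀ i, P i ≠ 0 := fun i => (zero_lt_one.trans (hP i)).ne'
  rw [vweight, ← sum_div_conj hP₀ hsum hp.ne', Finset.mul_sum,
    Real.rpow_sum_of_nonneg (norm_nonneg x)
      fun i _ => mul_nonneg hb (div_nonneg hp.le (conj_pos (hP i)).le)]
  refine Finset.prod_congr rfl fun i _ => ?_
  rw [← Real.rpow_mul (norm_nonneg x), mul_assoc, sub_one_mul_div_eq_div_conj]

lemma sigmaW_norm_rpow (hP : ∀ i, 1 < P i) (b : ℝ) (i : Fin m) :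
    sigmaW P (fun i (x : Rn n) => ‖x‖ ^ (b * (P i - 1))) i = fun x => ‖x‖ ^ (-b) :=
  funext fun x => rpow_mul_sub_one_rpow_one_sub_conj (norm_nonneg x) b (hP i).ne'

lemma _root_.ENNReal.prod_rpow_eq_rpow_sum {ι : Type*} (s : Finset ι) (x : ℝ≥0∞) {f : ι → ℝ}
    (hf : ∀ i ∈ s, 0 ≤ f i) : ∏ i ∈ s, x ^ f i = x ^ ∑ i ∈ s, f i := by
  induction s using Finset.cons_induction with
  | empty => simp
  | cons i s hi ih =>
    rw [Finset.forall_mem_cons] at hf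
    rw [Finset.prod_cons, Finset.sum_cons, ih hf.2,
      ENNReal.rpow_add_of_nonneg _ _ hf.1 (Finset.sum_nonneg hf.2)]

theorem APConst_norm_rpow_eq_ArConst (hm : 0 < m) (hP : ∀ i, 1 < P i)
    (hsum : 1 / p = ∑ i, 1 / P i) {b : ℝ} (hb : 0 ≤ b) :
    APConst p P (fun i (x : Rn n) => ‖x‖ ^ (b * (P i - 1))) =
      ArConst (m * p) (fun x : Rn n => ‖x‖ ^ (b * (m * p - 1))) := by
  obtain ⟨hp, hmp⟩ := pos_and_one_lt_mul_of_sum_inv hm hP hsum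
  have hP₀ : ∀ i, P i ≠ 0 := fun i => (zero_lt_one.trans (hP i)).ne'
  rw [ArConst_norm_rpow_eq hmp.ne', APConst, funext (vweight_norm_rpow hm hP hsum hb)]
  refine iSup_congr fun Q => ?_
  simp only [sigmaW_norm_rpow hP]
  rw [ENNReal.prod_rpow_eq_rpow_sum _ _ fun i _ => div_nonneg hp.le (conj_pos (hP i)).le,
    sum_div_conj hP₀ hsum hp.ne']

end Multilinear

/-- **Power weights: computation of the multiple `A_{P⃗}` constant and `A_∞` constants.** -/
theorem power_weight_constants
    (n m : ℕ) (hn : 0 < n) (hm : 0 < m) (p : ℝ) (P : Fin m → ℝ)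
    (hP : ∀ i, 1 < P i) (hsum : 1 / p = ∑ i, 1 / P i) :
    ∃ c C : ℝ≥0∞, 0 < c ∧ C ≠ ∞ ∧
      ∀ ε : ℝ, 0 < ε → ε < 1 →
        (∀ x : Rn n,
            vweight p P (fun i (x : Rn n) => ‖x‖ ^ ((n - ε) * (P i - 1))) x =
              ‖x‖ ^ ((n - ε) * (m * p - 1))) ∧
        APConst p P (fun i (x : Rn n) => ‖x‖ ^ ((n - ε) * (P i - 1))) =
            ArConst (m * p) (fun x : Rn n => ‖x‖ ^ ((n - ε) * (m * p - 1))) ∧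
        c * ENNReal.ofReal (1 / ε) ^ (m * p - 1) ≤
            APConst p P (fun i (x : Rn n) => ‖x‖ ^ ((n - ε) * (P i - 1))) ∧
        APConst p P (fun i (x : Rn n) => ‖x‖ ^ ((n - ε) * (P i - 1))) ≤
            C * ENNReal.ofReal (1 / ε) ^ (m * p - 1) ∧
        ∀ i, AinfConst (sigmaW P (fun i (x : Rn n) => ‖x‖ ^ ((n - ε) * (P i - 1))) i) ≤
            C * ENNReal.ofReal (1 / ε) := by
  obtain ⟨-, hmp⟩ := pos_and_one_lt_mul_of_sum_inv hm hP hsum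
  obtain ⟨c, hc, hlower⟩ := exists_pos_mul_le_ArConst_norm_rpow hn hmp
  set K := ENNReal.ofReal (powerConst n)
  refine ⟨c, K ^ (m * p - 1) + K, hc, by finiteness, fun ε hε hε1 => ?_⟩
  have hb : 0 ≤ (n : ℝ) - ε := by linarith [show (1 : ℝ) ≤ n by exact_mod_cast hn]
  have hAP := APConst_norm_rpow_eq_ArConst (n := n) hm hP hsum hb
  have hsplit : ENNReal.ofReal (powerConst n / ε) = K * ENNReal.ofReal (1 / ε) := by
    rw [← ENNReal.ofReal_mul (powerConst_pos hn).le, mul_one_div]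
  refine ⟨vweight_norm_rpow hm hP hsum hb, hAP, hAP ▸ hlower ε hε hε1.le, ?_, fun i => ?_⟩
  · calc _ ≤ ENNReal.ofReal (powerConst n / ε) ^ (m * p - 1) :=
          hAP ▸ ArConst_norm_rpow_le hn hε hε1.le hmp
      _ = K ^ (m * p - 1) * ENNReal.ofReal (1 / ε) ^ (m * p - 1) := by
          rw [hsplit, ENNReal.mul_rpow_of_nonneg _ _ (by linarith)]
      _ ≤ _ := by gcongr; exact le_self_add
  · calc _ ≤ ENNReal.ofReal (powerConst n / ε) := by
          rw [sigmaW_norm_rpow hP]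
          exact AinfConst_norm_rpow_neg_le hn hε hε1.le
      _ = K * ENNReal.ofReal (1 / ε) := hsplit
      _ ≤ _ := by gcongr; exact le_add_self

end Paper
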